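/- arXiv:1712.09891 — 5 statements merged into one kernel-verified Lean document; each statement's English description precedes it below -/
import Mathlib

section
/- Let 0 < α < 1 and a < b. For every t with a ≤ t < b, the left Riemann–Liouville fractional integral of order α based at a of the function s ↦ (b−s)^{α−1} satisfies (I^α_{a+} (b−·)^{α−1})(t) = ((b−t)^{2α−1}/Γ(α)) · ∫_1^{(b−a)/(b−t)} (w−1)^{α−1} w^{α−1} dw. -/
/-! The substitution `w = (b - s) / (b - t)` maps `[a, t]` onto `[1, (b - a) / (b - t)]`, with
`w - 1 = (t - s) / (b - t)`; both factors of the integrand are homogeneous in `b - t`. -/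

open MeasureTheory intervalIntegral Real

/-- Left Riemann–Liouville fractional integral of order `α` based at `a`:
`(I^α_{a+} f)(t) = (1/Γ(α)) ∫_a^t f(s) (t−s)^{α−1} ds`. -/
noncomputable def RLintegralLeft (α a : ℝ) (f : ℝ → ℝ) (t : ℝ) : ℝ :=
  (1 / Real.Gamma α) * ∫ s in a..t, f s * (t - s) ^ (α - 1)

-- The new variable is written `b / (b - t) - s / (b - t)`, as `integral_comp_sub_div` expects.
lemma sub_rpow_mul_sub_rpow_eq {s t b : ℝ} (β γ : ℝ) (hst : s ≤ t) (htb : t < b) :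
    (b - s) ^ β * (t - s) ^ γ =
      (b - t) ^ (β + γ) *
        ((b / (b - t) - s / (b - t) - 1) ^ γ * (b / (b - t) - s / (b - t)) ^ β) := by
  have hc : 0 < b - t := sub_pos.mpr htb
  have hw : b / (b - t) - s / (b - t) = (b - s) / (b - t) := by rw [sub_div]
  have hw1 : (b - s) / (b - t) - 1 = (t - s) / (b - t) := by field_simp; ring
  rw [hw, hw1, div_rpow (by linarith) hc.le, div_rpow (by linarith) hc.le, rpow_add hc]
  field_simp

theorem integral_sub_rpow_mul_sub_rpow {a t b : ℝ} (β γ : ℝ) (hat : a ≤ t) (htb : t < b) :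
    ∫ s in a..t, (b - s) ^ β * (t - s) ^ γ =
      (b - t) ^ (β + γ + 1) * ∫ w in (1 : ℝ)..((b - a) / (b - t)), (w - 1) ^ γ * w ^ β := by
  have hc : 0 < b - t := sub_pos.mpr htb
  have hlo : b / (b - t) - t / (b - t) = 1 := by rw [← sub_div, div_self hc.ne']
  have hhi : b / (b - t) - a / (b - t) = (b - a) / (b - t) := by rw [sub_div]
  rw [integral_congr fun s hs => sub_rpow_mul_sub_rpow_eq β γ (Set.uIcc_of_le hat ▸ hs).2 htb,
    intervalIntegral.integral_const_mul,
    integral_comp_sub_div (fun w => (w - 1) ^ γ * w ^ β) hc.ne', hlo, hhi, smul_eq_mul,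
    rpow_add_one hc.ne']
  ring

theorem stmt0_general (α a b : ℝ) :
    ∀ t : ℝ, a ≤ t → t < b →
      RLintegralLeft α a (fun s => (b - s) ^ (α - 1)) t =
        ((b - t) ^ (2 * α - 1) / Real.Gamma α) *
          ∫ w in (1:ℝ)..((b - a) / (b - t)), (w - 1) ^ (α - 1) * w ^ (α - 1) := by
  intro t hat htb
  rw [RLintegralLeft, integral_sub_rpow_mul_sub_rpow _ _ hat htb,
    show α - 1 + (α - 1) + 1 = 2 * α - 1 by ring]
  ring

theorem stmt0 (α a b : ℝ) (hα : 0 < α ∧ α < 1) (hab : a < b) :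
    ∀ t : ℝ, a ≤ t → t < b →
      RLintegralLeft α a (fun s => (b - s) ^ (α - 1)) t =
        ((b - t) ^ (2 * α - 1) / Real.Gamma α) *
          ∫ w in (1:ℝ)..((b - a) / (b - t)), (w - 1) ^ (α - 1) * w ^ (α - 1) :=
  stmt0_general α a b
end

section
/- Let 1/2 < α < 1 and a < b, and define ψ(t) = ((b−t)^{2α−1}/Γ(α)²) · ∫_1^{(b−a)/(b−t)} (w−1)^{α−1} w^{α−1} dw for t ∈ [a,b). Then ψ(a) = 0 and lim_{t → b⁻} ψ(t) = (b−a)^{2α−1} / ((2α−1) Γ(α)²). -/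
open Real Set Filter Topology MeasureTheory

/-!
For `w > 1` and `α ≤ 1` the integrand `(w - 1) ^ (α - 1) * w ^ (α - 1)` lies between
`w ^ (2α - 2)` and `(w - 1) ^ (2α - 2)`, so `I(M) = ∫_1^M (w - 1) ^ (α - 1) * w ^ (α - 1) dw`
is squeezed between `(M ^ (2α - 1) - 1) / (2α - 1)` and `(M - 1) ^ (2α - 1) / (2α - 1)`, whence
`I(M) / M ^ (2α - 1) → 1 / (2α - 1)` as `M → ∞`. With `M = (b - a) / (b - t)` one has
`ψ t = (b - a) ^ (2α - 1) / Γ(α)² · I(M) / M ^ (2α - 1)`, and `M → ∞` as `t → b⁻`.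
-/

section

variable {α : ℝ}

lemma rpow_two_mul_sub_two_le_sub_one_rpow_mul_rpow (hα : α ≤ 1) {w : ℝ} (hw : 1 < w) :
    w ^ (2 * α - 2) ≤ (w - 1) ^ (α - 1) * w ^ (α - 1) := by
  have hw0 : 0 < w := by linarith
  rw [show 2 * α - 2 = (α - 1) + (α - 1) by ring, rpow_add hw0]
  exact mul_le_mul_of_nonneg_right
    (rpow_le_rpow_of_nonpos (by linarith) (by linarith) (by linarith)) (by positivity)

lemma sub_one_rpow_mul_rpow_le_sub_one_rpow_two_mul_sub_two (hα : α ≤ 1) {w : ℝ}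
    (hw : 1 < w) :
    (w - 1) ^ (α - 1) * w ^ (α - 1) ≤ (w - 1) ^ (2 * α - 2) := by
  have hw0 : 0 < w - 1 := by linarith
  rw [show 2 * α - 2 = (α - 1) + (α - 1) by ring, rpow_add hw0]
  exact mul_le_mul_of_nonneg_left
    (rpow_le_rpow_of_nonpos hw0 (by linarith) (by linarith)) (by positivity)

lemma intervalIntegrable_sub_one_rpow {r : ℝ} (hr : -1 < r) (M : ℝ) :
    IntervalIntegrable (fun w : ℝ => (w - 1) ^ r) volume 1 M := by
  simpa using (intervalIntegral.intervalIntegrable_rpow' (a := 0) (b := M - 1) hr).comp_sub_right 1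

lemma integral_sub_one_rpow {r : ℝ} (hr : -1 < r) (M : ℝ) :
    ∫ w in (1 : ℝ)..M, (w - 1) ^ r = (M - 1) ^ (r + 1) / (r + 1) := by
  rw [intervalIntegral.integral_comp_sub_right (fun w => w ^ r), integral_rpow (Or.inl hr)]
  simp [zero_rpow (by linarith : r + 1 ≠ 0)]

lemma intervalIntegrable_sub_one_rpow_mul_rpow (hα₀ : 0 < α) (hα : α ≤ 1) {M : ℝ}
    (hM : 1 ≤ M) :
    IntervalIntegrable (fun w => (w - 1) ^ (α - 1) * w ^ (α - 1)) volume 1 M := by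
  refine (intervalIntegrable_sub_one_rpow (r := α - 1) (by linarith) M).mono_fun (by fun_prop) ?_
  filter_upwards [ae_restrict_mem measurableSet_uIoc] with w hw
  rw [uIoc_of_le hM] at hw
  have hw1 : 0 ≤ (w - 1) ^ (α - 1) := rpow_nonneg (by linarith [hw.1]) _
  have hw2 : w ^ (α - 1) ≤ 1 := rpow_le_one_of_one_le_of_nonpos hw.1.le (by linarith)
  rw [norm_of_nonneg hw1, norm_of_nonneg (mul_nonneg hw1 (rpow_nonneg (by linarith [hw.1]) _))]
  exact mul_le_of_le_one_right hw1 hw2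

noncomputable def betaTailIntegral (α M : ℝ) : ℝ :=
  ∫ w in (1 : ℝ)..M, (w - 1) ^ (α - 1) * w ^ (α - 1)

lemma rpow_sub_one_div_le_betaTailIntegral (hhalf : 1 / 2 < α) (hα : α ≤ 1) {M : ℝ}
    (hM : 1 ≤ M) :
    (M ^ (2 * α - 1) - 1) / (2 * α - 1) ≤ betaTailIntegral α M := by
  calc (M ^ (2 * α - 1) - 1) / (2 * α - 1) = ∫ w in (1 : ℝ)..M, w ^ (2 * α - 2) := by
        rw [integral_rpow (Or.inl (by linarith))]
        norm_num [show 2 * α - 2 + 1 = 2 * α - 1 by ring]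
    _ ≤ betaTailIntegral α M :=
        intervalIntegral.integral_mono_on_of_le_Ioo hM
          (intervalIntegral.intervalIntegrable_rpow' (by linarith))
          (intervalIntegrable_sub_one_rpow_mul_rpow (by linarith) hα hM)
          fun w hw => rpow_two_mul_sub_two_le_sub_one_rpow_mul_rpow hα hw.1

lemma betaTailIntegral_le_sub_one_rpow_div (hhalf : 1 / 2 < α) (hα : α ≤ 1) {M : ℝ}
    (hM : 1 ≤ M) :
    betaTailIntegral α M ≤ (M - 1) ^ (2 * α - 1) / (2 * α - 1) := by
  calc betaTailIntegral α M ≤ ∫ w in (1 : ℝ)..M, (w - 1) ^ (2 * α - 2) :=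
        intervalIntegral.integral_mono_on_of_le_Ioo hM
          (intervalIntegrable_sub_one_rpow_mul_rpow (by linarith) hα hM)
          (intervalIntegrable_sub_one_rpow (by linarith) M)
          fun w hw => sub_one_rpow_mul_rpow_le_sub_one_rpow_two_mul_sub_two hα hw.1
    _ = (M - 1) ^ (2 * α - 1) / (2 * α - 1) := by
        rw [integral_sub_one_rpow (by linarith)]
        ring_nf

lemma tendsto_betaTailIntegral_div_rpow (hhalf : 1 / 2 < α) (hα : α ≤ 1) :
    Tendsto (fun M => betaTailIntegral α M / M ^ (2 * α - 1)) atTop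
      (𝓝 (1 / (2 * α - 1))) := by
  have hp : 0 < 2 * α - 1 := by linarith
  have hlower : Tendsto (fun M : ℝ => (1 - (M ^ (2 * α - 1))⁻¹) / (2 * α - 1)) atTop
      (𝓝 (1 / (2 * α - 1))) := by
    simpa using ((tendsto_rpow_atTop hp).inv_tendsto_atTop.const_sub 1).div_const (2 * α - 1)
  refine tendsto_of_tendsto_of_tendsto_of_le_of_le' hlower tendsto_const_nhds ?_ ?_
  all_goals
    filter_upwards [eventually_ge_atTop (1 : ℝ)] with M hM
    have hMp : 0 < M ^ (2 * α - 1) := rpow_pos_of_pos (by linarith) _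
  · rw [le_div_iff₀ hMp]
    calc (1 - (M ^ (2 * α - 1))⁻¹) / (2 * α - 1) * M ^ (2 * α - 1)
        = (M ^ (2 * α - 1) - 1) / (2 * α - 1) := by field_simp
      _ ≤ betaTailIntegral α M := rpow_sub_one_div_le_betaTailIntegral hhalf hα hM
  · rw [div_le_iff₀ hMp]
    calc betaTailIntegral α M ≤ (M - 1) ^ (2 * α - 1) / (2 * α - 1) :=
          betaTailIntegral_le_sub_one_rpow_div hhalf hα hM
      _ ≤ M ^ (2 * α - 1) / (2 * α - 1) := by gcongr; linarith
      _ = 1 / (2 * α - 1) * M ^ (2 * α - 1) := by ring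

end

lemma tendsto_div_sub_nhdsLT_atTop {c b : ℝ} (hc : 0 < c) :
    Tendsto (fun t => c / (b - t)) (𝓝[<] b) atTop := by
  have hsub : Tendsto (fun t => b - t) (𝓝[<] b) (𝓝[>] 0) := by
    refine tendsto_nhdsWithin_of_tendsto_nhds_of_eventually_within _ ?_
      (eventually_nhdsWithin_of_forall fun _ ht => mem_Ioi.2 (sub_pos.2 ht))
    simpa using ((continuous_sub_left b).tendsto b).mono_left nhdsWithin_le_nhds
  simpa [div_eq_mul_inv] using (tendsto_inv_nhdsGT_zero.comp hsub).const_mul_atTop hc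

theorem stmt5 (α a b : ℝ) (hα : 1 / 2 < α ∧ α < 1) (hab : a < b)
    (ψ : ℝ → ℝ)
    (hψ : ∀ t, ψ t = ((b - t) ^ (2 * α - 1) / (Real.Gamma α) ^ 2) *
        ∫ w in (1:ℝ)..((b - a) / (b - t)), (w - 1) ^ (α - 1) * w ^ (α - 1)) :
    ψ a = 0 ∧
      Filter.Tendsto ψ (nhdsWithin b (Set.Iio b))
        (nhds ((b - a) ^ (2 * α - 1) / ((2 * α - 1) * (Real.Gamma α) ^ 2))) := by
  have hba : 0 < b - a := sub_pos.2 hab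
  refine ⟨by rw [hψ, div_self hba.ne', intervalIntegral.integral_same, mul_zero], ?_⟩
  have hψ_eq : ∀ t < b, ψ t = (b - a) ^ (2 * α - 1) / Gamma α ^ 2 *
      (betaTailIntegral α ((b - a) / (b - t)) / ((b - a) / (b - t)) ^ (2 * α - 1)) := by
    intro t ht
    have hbt : 0 < b - t := sub_pos.2 ht
    rw [hψ, betaTailIntegral, div_rpow hba.le hbt.le]
    field_simp
  have hlim := ((tendsto_betaTailIntegral_div_rpow hα.1 hα.2.le).comp
    (tendsto_div_sub_nhdsLT_atTop (b := b) hba)).const_mul ((b - a) ^ (2 * α - 1) / Gamma α ^ 2)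
  rw [mul_one_div, div_div, mul_comm (Gamma α ^ 2)] at hlim
  exact hlim.congr' (eventually_nhdsWithin_of_forall fun t ht => (hψ_eq t ht).symm)
end

section
/- Let 0 < α < 1 and λ ∈ ℝ. The function y₂(t) = t^{α} E_{2α,α+1}(−λ t^{2α}) satisfies the fractional differential equation −(^cD^α_{0+}(D^α_{0+} y₂))(t) = λ y₂(t) for every t > 0. -/
open MeasureTheory intervalIntegral Real

/-- Two-parameter Mittag–Leffler function `E_{δ,θ}(z) = ∑ z^k / Γ(δk + θ)`. -/
noncomputable def mittagLeffler (δ θ z : ℝ) : ℝ :=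
  ∑' k : ℕ, z ^ k / Real.Gamma (δ * k + θ)

/-- Left Riemann–Liouville fractional derivative of order `α` (0 < α < 1) based at `0`:
`(D^α_{0+} f)(t) = d/dt [ (1/Γ(1−α)) ∫_0^t f(s) (t−s)^{−α} ds ]`. -/
noncomputable def RLderivLeft0 (α : ℝ) (f : ℝ → ℝ) : ℝ → ℝ :=
  deriv (fun t => (1 / Real.Gamma (1 - α)) * ∫ s in (0:ℝ)..t, f s * (t - s) ^ (-α))

/-- Left Caputo fractional derivative of order `α` (0 < α < 1) based at `0`:
`(^cD^α_{0+} f)(t) = (1/Γ(1−α)) ∫_0^t f′(s) (t−s)^{−α} ds`. -/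
noncomputable def CaputoDerivLeft0 (α : ℝ) (f : ℝ → ℝ) (t : ℝ) : ℝ :=
  (1 / Real.Gamma (1 - α)) * ∫ s in (0:ℝ)..t, deriv f s * (t - s) ^ (-α)

/-!
Write `e_θ(t) = t ^ (θ - 1) * E_{2α,θ}(-λ t ^ (2α)) = ∑ₖ (-λ)ᵏ t ^ (2αk + θ - 1) / Γ(2αk + θ)`,
so that `y₂ = e_{α+1}` on `t > 0`. Termwise, the Beta integral gives `I^β e_θ = e_{θ+β}` for the
Riemann–Liouville integral, and `x / Γ(x + 1) = 1 / Γ(x)` gives `e_θ' = e_{θ-1}`; both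
interchanges of limits are justified by the superexponential growth of `Γ(2αk + θ)` in `k`, which
comes from the log-convexity of `Γ`. Hence `D^α y₂ = (I^{1-α} e_{α+1})' = e_2' = e_1` and
`(D^α y₂)' = e_0 = -λ e_{2α}` (the `k = 0` term of `e_0` vanishes since `1 / Γ(0) = 0`), so
`ᶜD^α (D^α y₂) = I^{1-α} (-λ e_{2α}) = -λ e_{α+1} = -λ y₂`.
-/

open Set Filter Topology ProbabilityTheory

lemma rpow_mul_Gamma_le_Gamma_add {x δ : ℝ} (hx : 1 < x) (hδ : 0 < δ) :
    (x - 1) ^ δ * Gamma x ≤ Gamma (x + δ) := by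
  -- the slope of `log ∘ Gamma` on `[x, x + δ]` is at least its slope `log (x - 1)` on `[x - 1, x]`
  have hΓ : Gamma x = (x - 1) * Gamma (x - 1) := by
    simpa using Gamma_add_one (s := x - 1) (by linarith)
  have hslope := convexOn_log_Gamma.slope_mono_adjacent (x := x - 1) (y := x) (z := x + δ)
    (by simp; linarith) (by simp; linarith) (by linarith) (by linarith)
  have hpos : 0 < Gamma (x - 1) := Gamma_pos_of_pos (by linarith)
  simp only [Function.comp, hΓ, sub_sub_cancel, div_one, add_sub_cancel_left] at hslope
  rw [log_mul (by linarith) hpos.ne', add_sub_cancel_right, le_div_iff₀ hδ] at hslope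
  have hΓx : 0 < Gamma x := Gamma_pos_of_pos (by linarith)
  rw [← log_le_log_iff (by positivity) (Gamma_pos_of_pos (by linarith)),
    log_mul (by positivity) hΓx.ne', log_rpow (by linarith), hΓ, log_mul (by linarith) hpos.ne']
  linarith

lemma summable_pow_div_Gamma {δ : ℝ} (hδ : 0 < δ) (θ r : ℝ) :
    Summable fun k : ℕ => r ^ k / Gamma (δ * k + θ) := by
  refine summable_of_ratio_norm_eventually_le (r := 1 / 2) (by norm_num) ?_
  have hlim : Tendsto (fun k : ℕ => δ * k + θ - 1) atTop atTop :=
    tendsto_atTop_add_const_right _ _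
      (tendsto_atTop_add_const_right _ _ (tendsto_natCast_atTop_atTop.const_mul_atTop hδ))
  filter_upwards [hlim.eventually_gt_atTop 0,
    ((tendsto_rpow_atTop hδ).comp hlim).eventually_ge_atTop (2 * |r|)] with k hk hkr
  have hx : 1 < δ * k + θ := by linarith
  have hΓ : 0 < Gamma (δ * k + θ) := Gamma_pos_of_pos (by linarith)
  have hgrowth := rpow_mul_Gamma_le_Gamma_add hx hδ
  simp only [Function.comp] at hkr
  rw [Nat.cast_succ, mul_add_one, add_right_comm, norm_div, norm_div, norm_pow, norm_pow,
    Real.norm_of_nonneg hΓ.le, Real.norm_of_nonneg (hgrowth.trans' (by positivity)),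
    div_le_iff₀ (hgrowth.trans_lt' (by positivity)), pow_succ, Real.norm_eq_abs]
  calc |r| ^ k * |r| ≤ |r| ^ k * ((δ * k + θ - 1) ^ δ / 2) := by gcongr; linarith
    _ = 1 / 2 * (|r| ^ k / Gamma (δ * k + θ)) * ((δ * k + θ - 1) ^ δ * Gamma (δ * k + θ)) := by
      field_simp
    _ ≤ _ := by gcongr

lemma div_Gamma_add_one (x : ℝ) : x / Gamma (x + 1) = (Gamma x)⁻¹ := by
  rcases eq_or_ne x 0 with rfl | hx
  · simp
  · rw [Gamma_add_one hx, div_mul_cancel_left₀ hx]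

lemma rpow_le_max_of_mem_Icc {a b s : ℝ} (ha : 0 < a) (hs : s ∈ Icc a b) (p : ℝ) :
    s ^ p ≤ max (a ^ p) (b ^ p) := by
  rcases le_total 0 p with hp | hp
  · exact le_max_of_le_right (rpow_le_rpow (ha.le.trans hs.1) hs.2 hp)
  · exact le_max_of_le_left (rpow_le_rpow_of_nonpos ha hs.1 hp)

lemma norm_ofReal_cpow_sub_one {x : ℝ} (hx : 0 ≤ x) (a : ℝ) :
    ‖(x : ℂ) ^ ((a : ℂ) - 1)‖ = x ^ (a - 1) := by
  rw [← Complex.ofReal_one, ← Complex.ofReal_sub, ← Complex.ofReal_cpow hx, Complex.norm_real,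
    Real.norm_of_nonneg (rpow_nonneg hx _)]

lemma intervalIntegrable_rpow_mul_one_sub_rpow {a b : ℝ} (ha : 0 < a) (hb : 0 < b) :
    IntervalIntegrable (fun x => x ^ (a - 1) * (1 - x) ^ (b - 1)) volume 0 1 := by
  refine (Complex.betaIntegral_convergent (u := a) (v := b) (by simpa) (by simpa)).norm.congr_uIoo
    fun x hx => ?_
  rw [uIoo_of_le zero_le_one] at hx
  simp only [norm_mul]
  rw [norm_ofReal_cpow_sub_one hx.1.le, show (1 : ℂ) - x = ((1 - x : ℝ) : ℂ) by push_cast; rfl,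
    norm_ofReal_cpow_sub_one (by linarith [hx.2])]

lemma intervalIntegrable_rpow_mul_sub_rpow {a b t : ℝ} (ha : 0 < a) (hb : 0 < b) (ht : 0 < t) :
    IntervalIntegrable (fun s => s ^ (a - 1) * (t - s) ^ (b - 1)) volume 0 t := by
  have h := ((intervalIntegrable_rpow_mul_one_sub_rpow ha hb).comp_mul_left (c := t⁻¹)).const_mul
    (t ^ (a - 1) * t ^ (b - 1))
  rw [zero_div, one_div, inv_inv] at h
  refine h.congr_uIoo fun s hs => ?_
  rw [uIoo_of_le ht.le] at hs
  have hts : 1 - t⁻¹ * s = t⁻¹ * (t - s) := by field_simp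
  simp only
  rw [hts, mul_rpow (by positivity) hs.1.le, mul_rpow (by positivity) (by linarith [hs.2]),
    inv_rpow ht.le, inv_rpow ht.le]
  field_simp

lemma integral_rpow_mul_sub_rpow {a b t : ℝ} (ha : 0 < a) (hb : 0 < b) (ht : 0 < t) :
    ∫ s in (0:ℝ)..t, s ^ (a - 1) * (t - s) ^ (b - 1) =
      beta a b * t ^ (a + b - 1) := by
  apply Complex.ofReal_injective
  rw [← intervalIntegral.integral_ofReal]
  have hcpow : ∀ s ∈ uIcc 0 t, ((s ^ (a - 1) * (t - s) ^ (b - 1) : ℝ) : ℂ) =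
      (s : ℂ) ^ ((a : ℂ) - 1) * ((t : ℂ) - s) ^ ((b : ℂ) - 1) := by
    intro s hs
    rw [uIcc_of_le ht.le] at hs
    push_cast [Complex.ofReal_cpow hs.1, Complex.ofReal_cpow (sub_nonneg.2 hs.2)]
    rfl
  rw [intervalIntegral.integral_congr hcpow, Complex.betaIntegral_scaled _ _ ht,
    Complex.betaIntegral_eq_Gamma_mul_div _ _ (by simpa) (by simpa), beta,
    ← Complex.ofReal_add, Complex.Gamma_ofReal, Complex.Gamma_ofReal, Complex.Gamma_ofReal]
  push_cast [Complex.ofReal_cpow ht.le]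
  ring

lemma integral_tsum_mul_rpow_mul_sub_rpow {c p : ℕ → ℝ} {b t : ℝ} (hp : ∀ k, 0 < p k)
    (hb : 0 < b) (ht : 0 < t)
    (hsum : Summable fun k => |c k| * beta (p k) b * t ^ (p k + b - 1)) :
    ∫ s in (0:ℝ)..t, ∑' k, c k * (s ^ (p k - 1) * (t - s) ^ (b - 1)) =
      ∑' k, c k * beta (p k) b * t ^ (p k + b - 1) := by
  have hint (k : ℕ) : IntegrableOn (fun s => s ^ (p k - 1) * (t - s) ^ (b - 1)) (Ioc 0 t) :=
    (intervalIntegrable_rpow_mul_sub_rpow (hp k) hb ht).1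
  have hintegral (k : ℕ) (c : ℝ) : ∫ s in Ioc 0 t, c * (s ^ (p k - 1) * (t - s) ^ (b - 1)) =
      c * beta (p k) b * t ^ (p k + b - 1) := by
    rw [MeasureTheory.integral_const_mul, ← intervalIntegral.integral_of_le ht.le,
      integral_rpow_mul_sub_rpow (hp k) hb ht, mul_assoc]
  have hnorm (k : ℕ) : ∫ s in Ioc 0 t, ‖c k * (s ^ (p k - 1) * (t - s) ^ (b - 1))‖ =
      |c k| * beta (p k) b * t ^ (p k + b - 1) := by
    rw [← hintegral]
    refine setIntegral_congr_fun measurableSet_Ioc fun s hs => ?_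
    rw [norm_mul, Real.norm_eq_abs, Real.norm_of_nonneg
      (mul_nonneg (rpow_nonneg hs.1.le _) (rpow_nonneg (sub_nonneg.2 hs.2) _))]
  rw [intervalIntegral.integral_of_le ht.le, ← integral_tsum_of_summable_integral_norm
    (fun k => (hint k).const_mul (c k)) (by simpa only [hnorm] using hsum)]
  exact tsum_congr fun k => hintegral k (c k)

/-- For `t > 0` this is `t ^ (θ - 1) * mittagLeffler δ θ (μ * t ^ δ)` (`mittagLefflerKernel_eq`),
written as a series in `t` so that it can be integrated and differentiated termwise. -/
noncomputable def mittagLefflerKernel (δ θ μ t : ℝ) : ℝ :=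
  ∑' k : ℕ, μ ^ k / Gamma (δ * k + θ) * t ^ (δ * k + θ - 1)

section MittagLefflerKernel

variable {δ θ μ t : ℝ}

lemma mittagLefflerKernel_term_eq (ht : 0 < t) (k : ℕ) :
    μ ^ k / Gamma (δ * k + θ) * t ^ (δ * k + θ - 1) =
      t ^ (θ - 1) * ((μ * t ^ δ) ^ k / Gamma (δ * k + θ)) := by
  rw [add_sub_assoc, rpow_add ht, rpow_mul_natCast ht.le, mul_pow]
  ring

lemma mittagLefflerKernel_eq (ht : 0 < t) :
    mittagLefflerKernel δ θ μ t = t ^ (θ - 1) * mittagLeffler δ θ (μ * t ^ δ) := by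
  simp only [mittagLefflerKernel, mittagLeffler, mittagLefflerKernel_term_eq ht, tsum_mul_left]

lemma summable_mittagLefflerKernel (hδ : 0 < δ) (ht : 0 < t) :
    Summable fun k : ℕ => μ ^ k / Gamma (δ * k + θ) * t ^ (δ * k + θ - 1) := by
  simpa only [mittagLefflerKernel_term_eq ht] using
    (summable_pow_div_Gamma hδ θ (μ * t ^ δ)).mul_left (t ^ (θ - 1))

lemma mittagLefflerKernel_zero (hδ : 0 < δ) (ht : 0 < t) :
    mittagLefflerKernel δ 0 μ t = μ * mittagLefflerKernel δ δ μ t := by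
  rw [mittagLefflerKernel, (summable_mittagLefflerKernel hδ ht).tsum_eq_zero_add,
    mittagLefflerKernel, ← tsum_mul_left]
  simp only [CharP.cast_eq_zero, mul_zero, add_zero, Gamma_zero, div_zero, zero_mul, zero_add]
  congr 1 with k
  push_cast
  ring_nf

lemma hasDerivAt_mittagLefflerKernel_term (k : ℕ) (ht : 0 < t) :
    HasDerivAt (fun s => μ ^ k / Gamma (δ * k + θ) * s ^ (δ * k + θ - 1))
      (μ ^ k / Gamma (δ * k + (θ - 1)) * t ^ (δ * k + (θ - 1) - 1)) t := by
  refine ((hasDerivAt_rpow_const (Or.inl ht.ne')).const_mul _).congr_deriv ?_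
  have hΓ := div_Gamma_add_one (δ * k + θ - 1)
  rw [sub_add_cancel] at hΓ
  rw [← add_sub_assoc, div_eq_mul_inv _ (Gamma (δ * k + θ - 1)), ← hΓ]
  ring

lemma hasDerivAt_mittagLefflerKernel (hδ : 0 < δ) (ht : 0 < t) :
    HasDerivAt (mittagLefflerKernel δ θ μ) (mittagLefflerKernel δ (θ - 1) μ t) t := by
  set C := max ((t / 2) ^ (θ - 1 - 1)) ((2 * t) ^ (θ - 1 - 1))
  have hbound : ∀ (k : ℕ), ∀ s ∈ Ioo (t / 2) (2 * t),
      ‖μ ^ k / Gamma (δ * k + (θ - 1)) * s ^ (δ * k + (θ - 1) - 1)‖ ≤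
        |(μ * (2 * t) ^ δ) ^ k / Gamma (δ * k + (θ - 1))| * C := by
    intro k s hs
    have hs0 : 0 < s := by linarith [hs.1]
    rw [mittagLefflerKernel_term_eq hs0, norm_mul, Real.norm_of_nonneg (by positivity), mul_comm]
    gcongr
    · have h2t : (0 : ℝ) < 2 * t := by positivity
      simp only [Real.norm_eq_abs, abs_div, abs_pow, abs_mul,
        abs_of_pos (rpow_pos_of_pos hs0 δ), abs_of_pos (rpow_pos_of_pos h2t δ)]
      gcongr
      exact hs.2.le
    · exact rpow_le_max_of_mem_Icc (by linarith) (Ioo_subset_Icc_self hs) _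
  have hmem : t ∈ Ioo (t / 2) (2 * t) := ⟨by linarith, by linarith⟩
  exact hasDerivAt_tsum_of_isPreconnected
    ((summable_pow_div_Gamma hδ (θ - 1) (μ * (2 * t) ^ δ)).abs.mul_right C) isOpen_Ioo
    isPreconnected_Ioo
    (fun k s hs => hasDerivAt_mittagLefflerKernel_term k (by linarith [hs.1])) hbound hmem
    (summable_mittagLefflerKernel hδ ht) hmem

end MittagLefflerKernel

/-- The Riemann–Liouville fractional integral `I^β_{0+} f`. -/
noncomputable def fracIntegral (β : ℝ) (f : ℝ → ℝ) (t : ℝ) : ℝ :=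
  (1 / Gamma β) * ∫ s in (0:ℝ)..t, f s * (t - s) ^ (β - 1)

section FracIntegral

variable {β t : ℝ}

lemma fracIntegral_congr {f g : ℝ → ℝ} (hfg : ∀ s, 0 < s → f s = g s) (ht : 0 ≤ t) :
    fracIntegral β f t = fracIntegral β g t := by
  unfold fracIntegral
  rw [intervalIntegral.integral_of_le ht, intervalIntegral.integral_of_le ht,
    setIntegral_congr_fun measurableSet_Ioc fun s hs => by rw [hfg s hs.1]]

lemma fracIntegral_const_mul (c : ℝ) (f : ℝ → ℝ) :
    fracIntegral β (fun s => c * f s) t = c * fracIntegral β f t := by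
  simp only [fracIntegral, mul_assoc, intervalIntegral.integral_const_mul]
  ring

lemma RLderivLeft0_eq_deriv_fracIntegral (α : ℝ) (f : ℝ → ℝ) :
    RLderivLeft0 α f = deriv (fracIntegral (1 - α) f) := by
  unfold RLderivLeft0 fracIntegral
  simp only [sub_sub_cancel_left]

lemma CaputoDerivLeft0_eq_fracIntegral_deriv (α : ℝ) (f : ℝ → ℝ) :
    CaputoDerivLeft0 α f = fracIntegral (1 - α) (deriv f) := by
  ext t
  simp only [CaputoDerivLeft0, fracIntegral, sub_sub_cancel_left]

lemma fracIntegral_mittagLefflerKernel {δ θ μ : ℝ} (hδ : 0 < δ) (hθ : 0 < θ) (hβ : 0 < β)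
    (ht : 0 < t) :
    fracIntegral β (mittagLefflerKernel δ θ μ) t = mittagLefflerKernel δ (θ + β) μ t := by
  have hp (k : ℕ) : 0 < δ * k + θ := by positivity
  have hsum : Summable fun k : ℕ =>
      |μ ^ k / Gamma (δ * k + θ)| * beta (δ * k + θ) β * t ^ (δ * k + θ + β - 1) := by
    refine ((summable_mittagLefflerKernel (θ := θ + β) (μ := |μ|) hδ ht).mul_left
      (Gamma β)).congr fun k => ?_
    rw [abs_div, abs_pow, abs_of_pos (Gamma_pos_of_pos (hp k)), beta, add_assoc]
    field_simp [(Gamma_pos_of_pos (hp k)).ne']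
  unfold fracIntegral mittagLefflerKernel
  simp_rw [← tsum_mul_right, mul_assoc]
  rw [integral_tsum_mul_rpow_mul_sub_rpow hp hβ ht hsum, ← tsum_mul_left]
  congr 1 with k
  rw [beta, add_assoc]
  field_simp [(Gamma_pos_of_pos (hp k)).ne']

end FracIntegral

theorem stmt11 (α lam : ℝ) (hα : 0 < α ∧ α < 1)
    (y₂ : ℝ → ℝ)
    (hy₂ : ∀ t, y₂ t = t ^ α * mittagLeffler (2 * α) (α + 1) (-lam * t ^ (2 * α))) :
    ∀ t : ℝ, 0 < t →
      -(CaputoDerivLeft0 α (RLderivLeft0 α y₂) t) = lam * y₂ t := by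
  obtain ⟨hα0, hα1⟩ := hα
  have hδ : 0 < 2 * α := by linarith
  have hβ : 0 < 1 - α := by linarith
  have hy (s : ℝ) (hs : 0 < s) : y₂ s = mittagLefflerKernel (2 * α) (α + 1) (-lam) s := by
    rw [hy₂, mittagLefflerKernel_eq hs, add_sub_cancel_right]
  have hRL (τ : ℝ) (hτ : 0 < τ) :
      RLderivLeft0 α y₂ τ = mittagLefflerKernel (2 * α) 1 (-lam) τ := by
    have hI : fracIntegral (1 - α) y₂ =ᶠ[𝓝 τ] mittagLefflerKernel (2 * α) 2 (-lam) := by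
      filter_upwards [Ioi_mem_nhds hτ] with x hx
      rw [fracIntegral_congr hy (le_of_lt hx),
        fracIntegral_mittagLefflerKernel hδ (by linarith) hβ hx, show α + 1 + (1 - α) = 2 by ring]
    rw [RLderivLeft0_eq_deriv_fracIntegral, hI.deriv_eq,
      (hasDerivAt_mittagLefflerKernel hδ hτ).deriv]
    norm_num
  have hRL' (σ : ℝ) (hσ : 0 < σ) :
      deriv (RLderivLeft0 α y₂) σ = -lam * mittagLefflerKernel (2 * α) (2 * α) (-lam) σ := by
    have hD : RLderivLeft0 α y₂ =ᶠ[𝓝 σ] mittagLefflerKernel (2 * α) 1 (-lam) := by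
      filter_upwards [Ioi_mem_nhds hσ] with x hx using hRL x hx
    rw [hD.deriv_eq, (hasDerivAt_mittagLefflerKernel hδ hσ).deriv, sub_self,
      mittagLefflerKernel_zero hδ hσ]
  intro t ht
  rw [CaputoDerivLeft0_eq_fracIntegral_deriv, fracIntegral_congr hRL' ht.le,
    fracIntegral_const_mul, fracIntegral_mittagLefflerKernel hδ hδ hβ ht,
    show 2 * α + (1 - α) = α + 1 by ring, hy t ht]
  ring
end

section
/- Let 1/2 < α < 1. The set of complex zeros of the Mittag–Leffler function z ↦ E_{2α,2}(z) = ∑_{k=0}^∞ z^k / Γ(2αk + 2) is infinite. -/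
open Complex

/-- Two-parameter Mittag–Leffler function of a complex variable,
`E_{δ,θ}(z) = ∑ z^k / Γ(δk + θ)`, with real parameters `δ, θ`. -/
noncomputable def mittagLefflerC (δ θ : ℝ) (z : ℂ) : ℂ :=
  ∑' k : ℕ, z ^ k / Complex.Gamma ((δ * k + θ : ℝ) : ℂ)

/-!
For `β > 1` the series defines an entire function `E` of order at most `1/β < 1`, and `E` is not
a polynomial because all its Taylor coefficients are positive. If `E` had only finitely many
zeros, dividing them out one at a time (via `dslope`) would leave a zero-free entire function
`g` of the same order. Then `g = exp h` with `Re h ≤ C (1 + |z|)^(1/β)`; Borel–Carathéodory turns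
this into `|h| ≤ B (1 + |z|)^(1/β)`, and Cauchy's estimate for `h'` on large circles makes `h`
constant. So `E` would be a constant times a polynomial, contradicting its growth along `ℝ₊`.
-/

open Set Metric Filter Topology

/-- Order at most `σ` *and* finite type at that order, which is stronger than the usual
`limsup log log M(r) / log r ≤ σ`. -/
def GrowthOrderLE (σ : ℝ) (f : ℂ → ℂ) : Prop :=
  ∃ C : ℝ, 0 ≤ C ∧ ∀ z, ‖f z‖ ≤ Real.exp (C * (1 + ‖z‖) ^ σ)

def PolynomiallyBounded (f : ℂ → ℂ) : Prop :=
  ∃ (D : ℝ) (m : ℕ), ∀ z, ‖f z‖ ≤ D * (1 + ‖z‖) ^ m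

theorem exists_differentiable_exp_eq {g : ℂ → ℂ} (hg : Differentiable ℂ g) (hg₀ : ∀ z, g z ≠ 0) :
    ∃ h : ℂ → ℂ, Differentiable ℂ h ∧ ∀ z, exp (h z) = g z := by
  obtain ⟨F, hF⟩ := (hg.deriv.div hg hg₀).isExactOn_univ
  have hF' (z : ℂ) : HasDerivAt F (deriv g z / g z) z := hF z (mem_univ z)
  have hconst (z : ℂ) : g z * exp (-F z) = g 0 * exp (-F 0) := by
    refine is_const_of_deriv_eq_zero (f := fun z => g z * exp (-F z)) (fun z => ?_) (fun z => ?_)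
      z 0
    · exact ((hg z).hasDerivAt.mul (hF' z).neg.cexp).differentiableAt
    · refine ((hg z).hasDerivAt.mul (hF' z).neg.cexp).deriv.trans ?_
      field_simp [hg₀ z]
      ring
  refine ⟨fun z => F z + log (g 0 * exp (-F 0)), fun z => (hF' z).differentiableAt.add_const _,
    fun z => ?_⟩
  rw [exp_add, exp_log (mul_ne_zero (hg₀ 0) (exp_ne_zero _)), ← hconst z, mul_left_comm,
    ← exp_add, add_neg_cancel, exp_zero, mul_one]

theorem Differentiable.apply_eq_apply_of_norm_le_rpow {h : ℂ → ℂ} (hh : Differentiable ℂ h)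
    {B σ : ℝ} (hσ₀ : 0 ≤ σ) (hσ₁ : σ < 1) (hB : ∀ z, ‖h z‖ ≤ B * (1 + ‖z‖) ^ σ) (z w : ℂ) :
    h z = h w := by
  have hB₀ : 0 ≤ B := by simpa using (norm_nonneg _).trans (hB 0)
  refine is_const_of_deriv_eq_zero hh (fun c => norm_le_zero_iff.mp ?_) z w
  have hbound : ∀ R ≥ 1 + ‖c‖, ‖_root_.deriv h c‖ ≤ B * 2 ^ σ * R ^ (σ - 1) := by
    intro R hR
    have hR₀ : 0 < R := by linarith [norm_nonneg c]
    refine (norm_deriv_le_of_forall_mem_sphere_norm_le (C := B * (2 * R) ^ σ) hR₀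
      hh.diffContOnCl fun u hu => (hB u).trans ?_).trans_eq ?_
    · have : ‖u‖ ≤ ‖c‖ + R := by
        simpa [mem_sphere_iff_norm.mp hu] using norm_le_norm_add_norm_sub' u c
      gcongr
      linarith
    · rw [Real.mul_rpow zero_le_two hR₀.le, Real.rpow_sub_one hR₀.ne']
      ring
  have hlim : Tendsto (fun R : ℝ => B * 2 ^ σ * R ^ (σ - 1)) atTop (𝓝 0) := by
    simpa [neg_sub] using (tendsto_rpow_neg_atTop (by linarith : 0 < 1 - σ)).const_mul (B * 2 ^ σ)
  exact ge_of_tendsto hlim ((eventually_ge_atTop _).mono hbound)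

theorem Differentiable.exists_norm_le_rpow_of_re_le {h : ℂ → ℂ} (hh : Differentiable ℂ h)
    {C σ : ℝ} (hC : 0 ≤ C) (hσ : 0 ≤ σ) (hre : ∀ z, (h z).re ≤ C * (1 + ‖z‖) ^ σ) :
    ∃ B, ∀ z, ‖h z‖ ≤ B * (1 + ‖z‖) ^ σ := by
  refine ⟨2 * (C * 2 ^ σ + 1) + 3 * ‖h 0‖, fun z => ?_⟩
  set M := C * (2 * (1 + ‖z‖)) ^ σ + 1
  have hz : z ∈ ball (0 : ℂ) (2 * ‖z‖ + 1) := by simp; linarith [norm_nonneg z]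
  have hmaps : MapsTo h (ball 0 (2 * ‖z‖ + 1)) {w | w.re ≤ M} := fun w hw => by
    have : ‖w‖ < 2 * ‖z‖ + 1 := by simpa using hw
    calc (h w).re ≤ C * (1 + ‖w‖) ^ σ := hre w
      _ ≤ C * (2 * (1 + ‖z‖)) ^ σ := by gcongr; linarith
      _ ≤ M := le_add_of_nonneg_right zero_le_one
  have hBC := borelCaratheodory (by positivity) hh.differentiableOn hmaps (by positivity) hz
  have hone : 1 ≤ (1 + ‖z‖) ^ σ := Real.one_le_rpow (by simp) hσ
  have hM : M ≤ (C * 2 ^ σ + 1) * (1 + ‖z‖) ^ σ := by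
    simp only [M, Real.mul_rpow zero_le_two (by positivity : (0 : ℝ) ≤ 1 + ‖z‖)]
    nlinarith
  have hR : 2 * ‖z‖ + 1 - ‖z‖ = 1 + ‖z‖ := by ring
  rw [hR] at hBC
  have h₁ : 2 * M * ‖z‖ / (1 + ‖z‖) ≤ 2 * M := by
    rw [div_le_iff₀ (by positivity)]
    nlinarith [norm_nonneg z, (by positivity : 0 ≤ M)]
  have h₂ : ‖h 0‖ * (2 * ‖z‖ + 1 + ‖z‖) / (1 + ‖z‖) ≤ 3 * ‖h 0‖ := by
    rw [div_le_iff₀ (by positivity)]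
    nlinarith [norm_nonneg z, norm_nonneg (h 0)]
  nlinarith [norm_nonneg (h 0)]

theorem Differentiable.apply_eq_apply_of_growthOrderLE {g : ℂ → ℂ} (hg : Differentiable ℂ g)
    (hg₀ : ∀ z, g z ≠ 0) {σ : ℝ} (hσ₀ : 0 ≤ σ) (hσ₁ : σ < 1) (hgrowth : GrowthOrderLE σ g)
    (z w : ℂ) : g z = g w := by
  obtain ⟨h, hh, hexp⟩ := exists_differentiable_exp_eq hg hg₀
  obtain ⟨C, hC, hgC⟩ := hgrowth
  have hre (z : ℂ) : (h z).re ≤ C * (1 + ‖z‖) ^ σ := by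
    rw [← Real.exp_le_exp, ← norm_exp, hexp]
    exact hgC z
  obtain ⟨B, hB⟩ := hh.exists_norm_le_rpow_of_re_le hC hσ₀ hre
  rw [← hexp, ← hexp, hh.apply_eq_apply_of_norm_le_rpow hσ₀ hσ₁ hB z w]

theorem GrowthOrderLE.of_eq_sub_mul {f g : ℂ → ℂ} {σ : ℝ} {a : ℂ} (hσ : 0 ≤ σ)
    (hf : GrowthOrderLE σ f) (hg : Differentiable ℂ g) (hfg : ∀ z, f z = (z - a) * g z) :
    GrowthOrderLE σ g := by
  obtain ⟨C, hC, hfC⟩ := hf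
  have hK : 1 ≤ (2 + ‖a‖) ^ σ := Real.one_le_rpow (by linarith [norm_nonneg a]) hσ
  refine ⟨C * (2 + ‖a‖) ^ σ, by positivity, fun z => ?_⟩
  have hZ : 1 ≤ (1 + ‖z‖) ^ σ := Real.one_le_rpow (by linarith [norm_nonneg z]) hσ
  rcases le_or_gt 1 ‖z - a‖ with hza | hza
  · calc ‖g z‖ ≤ ‖z - a‖ * ‖g z‖ := le_mul_of_one_le_left (norm_nonneg _) hza
      _ = ‖f z‖ := by rw [hfg, norm_mul]
      _ ≤ Real.exp (C * (1 + ‖z‖) ^ σ) := hfC z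
      _ ≤ Real.exp (C * (2 + ‖a‖) ^ σ * (1 + ‖z‖) ^ σ) := by
          rw [mul_right_comm]
          exact Real.exp_le_exp.mpr (le_mul_of_one_le_right (by positivity) hK)
  · have hsphere : ∀ w ∈ frontier (ball a 1), ‖g w‖ ≤ Real.exp (C * (2 + ‖a‖) ^ σ) := by
      intro w hw
      rw [frontier_ball a one_ne_zero, mem_sphere_iff_norm] at hw
      have : ‖w‖ ≤ ‖a‖ + 1 := by simpa [hw] using norm_le_norm_add_norm_sub' w a
      calc ‖g w‖ = ‖f w‖ := by rw [hfg, norm_mul, hw, one_mul]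
        _ ≤ Real.exp (C * (1 + ‖w‖) ^ σ) := hfC w
        _ ≤ Real.exp (C * (2 + ‖a‖) ^ σ) := by gcongr Real.exp (C * ?_ ^ σ); linarith
    calc ‖g z‖ ≤ Real.exp (C * (2 + ‖a‖) ^ σ) :=
          norm_le_of_forall_mem_frontier_norm_le isBounded_ball hg.diffContOnCl hsphere
            (subset_closure (mem_ball_iff_norm.mpr hza))
      _ ≤ Real.exp (C * (2 + ‖a‖) ^ σ * (1 + ‖z‖) ^ σ) :=
          Real.exp_le_exp.mpr (le_mul_of_one_le_right (by positivity) hZ)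

theorem PolynomiallyBounded.sub_mul {g : ℂ → ℂ} (hg : PolynomiallyBounded g) (a : ℂ) :
    PolynomiallyBounded fun z => (z - a) * g z := by
  obtain ⟨D, m, hD⟩ := hg
  refine ⟨D * (1 + ‖a‖), m + 1, fun z => ?_⟩
  have hza : ‖z - a‖ ≤ (1 + ‖a‖) * (1 + ‖z‖) := by
    nlinarith [norm_sub_le z a, norm_nonneg z, norm_nonneg a]
  calc ‖(z - a) * g z‖ = ‖z - a‖ * ‖g z‖ := norm_mul _ _
    _ ≤ (1 + ‖a‖) * (1 + ‖z‖) * (D * (1 + ‖z‖) ^ m) :=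
        mul_le_mul hza (hD z) (norm_nonneg _) (by positivity)
    _ = D * (1 + ‖a‖) * (1 + ‖z‖) ^ (m + 1) := by ring

theorem analyticOrderNatAt_sub_const {𝕜 : Type*} [NontriviallyNormedField 𝕜] [DecidableEq 𝕜]
    (a b : 𝕜) :
    analyticOrderNatAt (· - a) b = if b = a then 1 else 0 := by
  split_ifs with h
  · simp [analyticOrderNatAt, h]
  · simp [analyticOrderNatAt, analyticOrderAt_id_sub_const_of_ne h]

theorem Differentiable.sum_analyticOrderNatAt_sub_mul {g : ℂ → ℂ} (hg : Differentiable ℂ g)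
    (hg₀ : g ≠ 0) {a : ℂ} {s : Finset ℂ} (ha : a ∈ s) :
    ∑ b ∈ s, analyticOrderNatAt (fun z => (z - a) * g z) b
      = ∑ b ∈ s, analyticOrderNatAt g b + 1 := by
  have hmul (b : ℂ) : analyticOrderNatAt (fun z => (z - a) * g z) b
      = (if b = a then 1 else 0) + analyticOrderNatAt g b := by
    rw [← analyticOrderNatAt_sub_const]
    refine analyticOrderNatAt_mul (f := (· - a)) (by fun_prop) (hg.analyticAt b) ?_ ?_
    · rcases eq_or_ne b a with rfl | h <;> simp [*]
    · exact mt (AnalyticOnNhd.analyticOrderAt_eq_top_iff_eq_zero b hg.analyticAt).mp hg₀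
  simp only [hmul, Finset.sum_add_distrib, Finset.sum_ite_eq', ha, if_true]
  ring

theorem Differentiable.polynomiallyBounded_of_zeros_subset {f : ℂ → ℂ} (hf : Differentiable ℂ f)
    (hf₀ : f ≠ 0) {σ : ℝ} (hσ₀ : 0 ≤ σ) (hσ₁ : σ < 1) (hgrowth : GrowthOrderLE σ f)
    {s : Finset ℂ} (hs : ∀ z, f z = 0 → z ∈ s) : PolynomiallyBounded f := by
  obtain ⟨n, hn⟩ : ∃ n, ∑ a ∈ s, analyticOrderNatAt f a = n := ⟨_, rfl⟩
  induction n using Nat.strong_induction_on generalizing f with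
  | _ n ih =>
    by_cases hzero : ∃ a, f a = 0
    · obtain ⟨a, ha⟩ := hzero
      have hg : Differentiable ℂ (dslope f a) :=
        differentiableOn_univ.mp ((differentiableOn_dslope univ_mem).mpr hf.differentiableOn)
      have hfg : f = fun z => (z - a) * dslope f a z := by
        funext z
        simpa [ha, eq_comm] using sub_smul_dslope f a z
      have hg₀ : dslope f a ≠ 0 := fun h => hf₀ (by rw [hfg, h]; ext; simp)
      have hsum := hg.sum_analyticOrderNatAt_sub_mul hg₀ (hs a ha)
      rw [← hfg, hn] at hsum
      rw [hfg]
      refine PolynomiallyBounded.sub_mul (ih _ (by omega) hg hg₀ ?_ (fun z hz => hs z ?_) rfl) a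
      · exact hgrowth.of_eq_sub_mul hσ₀ hg (congrFun hfg)
      · rw [hfg]; simp [hz]
    · refine ⟨‖f 0‖, 0, fun z => ?_⟩
      rw [hf.apply_eq_apply_of_growthOrderLE (not_exists.mp hzero) hσ₀ hσ₁ hgrowth z 0]
      simp

noncomputable def mittagLefflerCoeff (β θ : ℝ) (k : ℕ) : ℝ := (Real.Gamma (β * k + θ))⁻¹

theorem mittagLefflerC_eq_tsum (β θ : ℝ) (z : ℂ) :
    mittagLefflerC β θ z = ∑' k, z ^ k * (mittagLefflerCoeff β θ k : ℂ) := by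
  simp only [mittagLefflerC, mittagLefflerCoeff, Complex.Gamma_ofReal, ofReal_inv, div_eq_mul_inv]

section MittagLeffler

variable {β θ : ℝ}

theorem mittagLefflerCoeff_pos (hβ : 0 ≤ β) (hθ : 0 < θ) (k : ℕ) : 0 < mittagLefflerCoeff β θ k :=
  inv_pos.mpr (Real.Gamma_pos_of_pos (by positivity))

theorem mittagLefflerCoeff_le_inv_factorial (hβ : 0 ≤ β) (hθ : 2 ≤ θ) (k : ℕ) :
    mittagLefflerCoeff β θ k ≤ ((⌊β * k⌋₊ + 1).factorial : ℝ)⁻¹ := by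
  refine inv_anti₀ (by positivity) ?_
  have hβk : 0 ≤ β * k := by positivity
  have hfloor : (⌊β * k⌋₊ : ℝ) ≤ β * k := Nat.floor_le hβk
  rw [← Real.Gamma_nat_eq_factorial, Nat.cast_add_one, add_assoc, one_add_one_eq_two]
  exact Real.Gamma_strictMonoOn_Ici.monotoneOn (by simp) (mem_Ici.mpr (by linarith))
    (by linarith)

theorem pow_mul_mittagLefflerCoeff_le (hβ : 1 ≤ β) (hθ : 2 ≤ θ) {r : ℝ} (hr : 0 ≤ r) (k : ℕ) :
    r ^ k * mittagLefflerCoeff β θ k ≤ Real.exp (2 * (1 + r) ^ β⁻¹) * (1 / 2) ^ k := by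
  set x := (1 + r) ^ β⁻¹
  set n := ⌊β * k⌋₊
  have hx : 1 ≤ x := Real.one_le_rpow (by linarith) (by positivity)
  have hkn : k ≤ n := Nat.le_floor (by nlinarith [(Nat.cast_nonneg k : (0 : ℝ) ≤ k)])
  have hpow : r ^ k ≤ x ^ (n + 1) := by
    calc r ^ k ≤ (1 + r) ^ k := by gcongr; linarith
      _ = x ^ (β * k) := by
        rw [← Real.rpow_mul (by linarith), inv_mul_cancel_left₀ (by positivity),
          Real.rpow_natCast]
      _ ≤ x ^ ((n + 1 : ℕ) : ℝ) :=
        Real.rpow_le_rpow_of_exponent_le hx (by push_cast; exact (Nat.lt_floor_add_one _).le)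
      _ = x ^ (n + 1) := Real.rpow_natCast x (n + 1)
  calc r ^ k * mittagLefflerCoeff β θ k ≤ x ^ (n + 1) * ((n + 1).factorial : ℝ)⁻¹ :=
        mul_le_mul hpow (mittagLefflerCoeff_le_inv_factorial (by linarith) hθ k)
          (mittagLefflerCoeff_pos (by linarith) (by linarith) k).le (by positivity)
    _ = (2 * x) ^ (n + 1) / (n + 1).factorial * (1 / 2) ^ (n + 1) := by
        rw [mul_pow]; field_simp; rw [← mul_pow]; norm_num
    _ ≤ Real.exp (2 * x) * (1 / 2) ^ k :=
        mul_le_mul (Real.pow_div_factorial_le_exp _ (by positivity) _)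
          (pow_le_pow_of_le_one (by norm_num) (by norm_num) (by omega)) (by positivity)
          (by positivity)

theorem summable_pow_mul_mittagLefflerCoeff (hβ : 1 ≤ β) (hθ : 2 ≤ θ) {r : ℝ} (hr : 0 ≤ r) :
    Summable fun k => r ^ k * mittagLefflerCoeff β θ k :=
  ((summable_geometric_of_lt_one (by norm_num) (by norm_num)).mul_left _).of_nonneg_of_le
    (fun k => mul_nonneg (by positivity) (mittagLefflerCoeff_pos (by linarith) (by linarith) k).le)
    (pow_mul_mittagLefflerCoeff_le hβ hθ hr)

theorem norm_pow_mul_mittagLefflerCoeff (hβ : 0 ≤ β) (hθ : 0 < θ) (z : ℂ) (k : ℕ) :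
    ‖z ^ k * (mittagLefflerCoeff β θ k : ℂ)‖ = ‖z‖ ^ k * mittagLefflerCoeff β θ k := by
  rw [norm_mul, norm_pow, norm_real, Real.norm_of_nonneg (mittagLefflerCoeff_pos hβ hθ k).le]

theorem growthOrderLE_mittagLefflerC (hβ : 1 ≤ β) (hθ : 2 ≤ θ) :
    GrowthOrderLE β⁻¹ (mittagLefflerC β θ) := by
  refine ⟨4, by norm_num, fun z => ?_⟩
  set x := (1 + ‖z‖) ^ β⁻¹
  have hx : 1 ≤ x := Real.one_le_rpow (by linarith [norm_nonneg z]) (by positivity)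
  have hsum : HasSum (fun k : ℕ => Real.exp (2 * x) * (1 / 2) ^ k) (Real.exp (2 * x) * 2) := by
    simpa using (hasSum_geometric_two).mul_left (Real.exp (2 * x))
  calc ‖mittagLefflerC β θ z‖ ≤ Real.exp (2 * x) * 2 := by
        rw [mittagLefflerC_eq_tsum]
        refine tsum_of_norm_bounded hsum fun k => ?_
        rw [norm_pow_mul_mittagLefflerCoeff (by linarith) (by linarith)]
        exact pow_mul_mittagLefflerCoeff_le hβ hθ (norm_nonneg z) k
    _ ≤ Real.exp (2 * x) * Real.exp (2 * x) := by
        gcongr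
        linarith [Real.add_one_le_exp (2 * x)]
    _ = Real.exp (4 * x) := by rw [← Real.exp_add]; ring_nf

theorem differentiable_mittagLefflerC (hβ : 1 ≤ β) (hθ : 2 ≤ θ) :
    Differentiable ℂ (mittagLefflerC β θ) := by
  intro z
  have hU : ball (0 : ℂ) (‖z‖ + 1) ∈ 𝓝 z := isOpen_ball.mem_nhds (by simp)
  refine (DifferentiableOn.differentiableAt ?_ hU)
  simp only [funext (mittagLefflerC_eq_tsum β θ)]
  refine differentiableOn_tsum_of_summable_norm
    (summable_pow_mul_mittagLefflerCoeff hβ hθ (r := ‖z‖ + 1) (by positivity))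
    (fun k => by fun_prop) isOpen_ball fun k w hw => ?_
  rw [norm_pow_mul_mittagLefflerCoeff (by linarith) (by linarith)]
  gcongr
  · exact (mittagLefflerCoeff_pos (by linarith) (by linarith) k).le
  · exact (mem_ball_zero_iff.mp hw).le

theorem pow_mul_mittagLefflerCoeff_le_norm (hβ : 1 ≤ β) (hθ : 2 ≤ θ) {r : ℝ} (hr : 0 ≤ r)
    (m : ℕ) : r ^ m * mittagLefflerCoeff β θ m ≤ ‖mittagLefflerC β θ r‖ := by
  have hnonneg (k : ℕ) : 0 ≤ r ^ k * mittagLefflerCoeff β θ k :=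
    mul_nonneg (by positivity) (mittagLefflerCoeff_pos (by linarith) (by linarith) k).le
  rw [mittagLefflerC_eq_tsum]
  simp only [← ofReal_pow, ← ofReal_mul, ← ofReal_tsum, norm_real,
    Real.norm_of_nonneg (tsum_nonneg hnonneg)]
  exact (summable_pow_mul_mittagLefflerCoeff hβ hθ hr).le_tsum m fun k _ => hnonneg k

theorem not_polynomiallyBounded_mittagLefflerC (hβ : 1 ≤ β) (hθ : 2 ≤ θ) :
    ¬ PolynomiallyBounded (mittagLefflerC β θ) := by
  rintro ⟨D, m, hD⟩
  set c := mittagLefflerCoeff β θ (m + 1)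
  have hc : 0 < c := mittagLefflerCoeff_pos (by linarith) (by linarith) _
  set r := max 1 (D * 2 ^ m / c + 1)
  have hr : 1 ≤ r := le_max_left _ _
  have hrD : D * 2 ^ m < r * c := by
    have := le_max_right 1 (D * 2 ^ m / c + 1)
    rw [← div_lt_iff₀ hc]
    linarith
  have hle := (pow_mul_mittagLefflerCoeff_le_norm hβ hθ (zero_le_one.trans hr) (m + 1)).trans
    (hD r)
  rw [norm_real, Real.norm_of_nonneg (zero_le_one.trans hr)] at hle
  have hD₀ : 0 ≤ D := by simpa using (norm_nonneg _).trans (hD 0)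
  have hpow : 0 < r ^ m := pow_pos (zero_lt_one.trans_le hr) m
  have := calc r ^ m * (r * c) = r ^ (m + 1) * c := by ring
    _ ≤ D * (1 + r) ^ m := hle
    _ ≤ D * (2 * r) ^ m := by gcongr; linarith
    _ = r ^ m * (D * 2 ^ m) := by ring
  linarith [mul_lt_mul_of_pos_left hrD hpow]

end MittagLeffler

theorem infinite_setOf_mittagLefflerC_eq_zero {β θ : ℝ} (hβ : 1 < β) (hθ : 2 ≤ θ) :
    {z | mittagLefflerC β θ z = 0}.Infinite := by
  intro hfin
  have hE₀ : mittagLefflerC β θ ≠ 0 := fun h => by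
    have := pow_mul_mittagLefflerCoeff_le_norm hβ.le hθ le_rfl 0
    simp only [pow_zero, one_mul, h, Pi.zero_apply, norm_zero] at this
    exact (mittagLefflerCoeff_pos (by linarith) (by linarith) 0).not_ge this
  exact not_polynomiallyBounded_mittagLefflerC hβ.le hθ <|
    (differentiable_mittagLefflerC hβ.le hθ).polynomiallyBounded_of_zeros_subset hE₀
      (by positivity) (inv_lt_one_of_one_lt₀ hβ) (growthOrderLE_mittagLefflerC hβ.le hθ)
      (s := hfin.toFinset) fun z hz => hfin.mem_toFinset.mpr hz

theorem stmt14 (α : ℝ) (hα : 1 / 2 < α ∧ α < 1) :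
    {z : ℂ | mittagLefflerC (2 * α) 2 z = 0}.Infinite :=
  infinite_setOf_mittagLefflerC_eq_zero (by linarith [hα.1]) le_rfl
end

section
/- For every fixed λ > 0, the Mittag–Leffler value E_{2α,2}(−λ) = ∑_{k=0}^∞ (−λ)^k / Γ(2αk + 2) converges, as α → 1⁻, to sin(√λ)/√λ; that is, lim_{α→1⁻} ∑_{k=0}^∞ (−λ)^k / Γ(2αk + 2) = sin(√λ)/√λ. -/
open Real Filter Topology

theorem stmt19 (lam : ℝ) (hlam : 0 < lam) :
    Filter.Tendsto
      (fun α : ℝ => ∑' k : ℕ, (-lam) ^ k / Real.Gamma (2 * α * k + 2))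
      (nhdsWithin 1 (Set.Iio 1))
      (nhds (Real.sin (Real.sqrt lam) / Real.sqrt lam)) := by
  have key : Filter.Tendsto
      (fun α : ℝ => ∑' k : ℕ, (-lam) ^ k / Real.Gamma (2 * α * k + 2))
      (nhdsWithin 1 (Set.Iio 1))
      (nhds (∑' k : ℕ, (-lam) ^ k / Real.Gamma (2 * (1:ℝ) * k + 2))) := by
    apply tendsto_tsum_of_dominated_convergence
      (bound := fun k : ℕ => lam ^ k / k.factorial)
    · exact Real.summable_pow_div_factorial lam
    · intro k
      have hne : Real.Gamma (2 * (1:ℝ) * k + 2) ≠ 0 := by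
        apply (Real.Gamma_pos_of_pos ?_).ne'
        positivity
      have hc : ContinuousAt (fun α : ℝ => Real.Gamma (2 * α * k + 2)) 1 := by
        apply ContinuousAt.comp (g := Real.Gamma)
        · apply (Real.differentiableAt_Gamma ?_).continuousAt
          intro m
          have h2 : -(m:ℝ) ≤ 0 := neg_nonpos.mpr (Nat.cast_nonneg m)
          exact (lt_of_le_of_lt h2 (by positivity)).ne'
        · fun_prop
      exact (tendsto_const_nhds.div hc.tendsto hne).mono_left nhdsWithin_le_nhds
    · filter_upwards [Ioo_mem_nhdsLT_of_mem (by norm_num : (1:ℝ) ∈ Set.Ioc (1/2) 1)]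
        with α hα k
      have hfac : (k.factorial : ℝ) = Real.Gamma (k + 1) :=
        (Real.Gamma_nat_eq_factorial k).symm
      have hk0 : (0:ℝ) ≤ (k:ℝ) := Nat.cast_nonneg k
      have hαpos : (0:ℝ) < α := lt_trans (by norm_num) hα.1
      have hpos : (0:ℝ) < 2 * α * k + 2 := by nlinarith
      have hle : Real.Gamma ((k:ℝ) + 1) ≤ Real.Gamma (2 * α * k + 2) := by
        rcases Nat.eq_zero_or_pos k with hk | hk
        · subst hk
          simp only [Nat.cast_zero, mul_zero, zero_add]
          rw [Real.Gamma_one, Real.Gamma_two]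
        · have hk1 : (1:ℝ) ≤ (k:ℝ) := by exact_mod_cast hk
          apply Real.Gamma_strictMonoOn_Ici.monotoneOn
          · simp only [Set.mem_Ici]; linarith
          · simp only [Set.mem_Ici]
            nlinarith [mul_nonneg (by linarith [hα.1] : (0:ℝ) ≤ 2 * α - 1) hk0]
          · nlinarith [mul_nonneg (by linarith [hα.1] : (0:ℝ) ≤ 2 * α - 1) hk0]
      rw [norm_div, norm_pow, norm_neg, Real.norm_of_nonneg hlam.le,
        Real.norm_of_nonneg (Real.Gamma_pos_of_pos hpos).le, hfac]
      exact div_le_div_of_nonneg_left (by positivity)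
        (Real.Gamma_pos_of_pos (by positivity : (0:ℝ) < (k:ℝ) + 1)) hle
  convert key using 2
  have hsq : Real.sqrt lam ^ 2 = lam := Real.sq_sqrt hlam.le
  have hsqpos : 0 < Real.sqrt lam := Real.sqrt_pos.mpr hlam
  rw [Real.sin_eq_tsum, ← tsum_div_const]
  congr 1
  funext k
  have hΓ : Real.Gamma (2 * (1:ℝ) * k + 2) = ((2 * k + 1).factorial : ℝ) := by
    rw [show (2 * (1:ℝ) * k + 2) = ((2 * k + 1 : ℕ) : ℝ) + 1 by push_cast; ring,
      Real.Gamma_nat_eq_factorial]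
  rw [hΓ]
  rw [show Real.sqrt lam ^ (2 * k + 1) = lam ^ k * Real.sqrt lam by
    rw [pow_succ, pow_mul, hsq]]
  rw [neg_pow]
  field_simp
  ring
end
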